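/- Let K be an algebraically closed field, let S and S₀ be varieties over K, let p : S₀ → S be a finite surjective morphism, let f : C → S be a proper morphism with C a separated scheme of finite type over K, and let U be an open subscheme of C. Form the fiber product C₀ = C ×_S S₀ with projection q : C₀ → C, and let U₀ = q⁻¹(U). If there exists an irreducible closed subset T₀ of the underlying space of C₀ with T₀ contained in U₀ and with Krull dimension equal to the Krull dimension of S₀, then there exists an irreducible closed subset T of the underlying space of C with T contained in U and with Krull dimension equal to the Krull dimension of S. -/

import Mathlib

/-!
A finite morphism is closed and has discrete fibres, so on points ordered by specialization it
is strictly monotone, and closedness lets chains of specializations in the target be lifted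
(going up). A finite surjective morphism therefore preserves the topological Krull dimension,
and so does a finite morphism between a closed subset and its image. Applied to the finite
base change `q : C ×_S S₀ ⟶ C` of `p`, the set `q(T₀)` is irreducible, closed, contained in `U`,
and has dimension `dim T₀ = dim S₀ = dim S`.
-/

open AlgebraicGeometry CategoryTheory CategoryTheory.Limits Topology

/-- A variety over `K`: an integral scheme, separated and of finite type over `K`
(with respect to the given structure morphism). -/
def IsVarietyOver (K : Type) [Field K] (X : Scheme)
    (sX : X ⟶ AlgebraicGeometry.Spec (CommRingCat.of K)) : Prop :=
  IsIntegral X ∧ IsSeparated sX ∧ LocallyOfFiniteType sX ∧ QuasiCompact sX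

namespace Order

variable {α β : Type*} [Preorder α] [Preorder β]

lemma exists_ltSeries_lift_of_exists_lt {f : α → β} (hf : Function.Surjective f)
    (hlift : ∀ a b, b < f a → ∃ a' < a, f a' = b) (l : LTSeries β) :
    ∃ L : LTSeries α, L.length = l.length ∧ f L.head = l.head := by
  induction l using RelSeries.inductionOn with
  | singleton b =>
    obtain ⟨a, rfl⟩ := hf b
    exact ⟨RelSeries.singleton _ a, rfl, rfl⟩
  | cons l b hb ih =>
    obtain ⟨L, hlen, hhead⟩ := ih
    obtain ⟨a, ha, rfl⟩ := hlift L.head b (hhead ▸ hb)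
    exact ⟨L.cons a ha, by simp [hlen], by simp⟩

lemma krullDim_le_of_surjective_of_exists_lt {f : α → β} (hf : Function.Surjective f)
    (hlift : ∀ a b, b < f a → ∃ a' < a, f a' = b) :
    krullDim β ≤ krullDim α :=
  iSup_le fun l ↦ by
    obtain ⟨L, hlen, -⟩ := exists_ltSeries_lift_of_exists_lt hf hlift l
    exact hlen ▸ LTSeries.length_le_krullDim L

end Order

section Topology

variable {X Y : Type*} [TopologicalSpace X] [TopologicalSpace Y]
  [QuasiSober X] [QuasiSober Y] [T0Space X] [T0Space Y] {g : X → Y}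

theorem topologicalKrullDim_eq_of_specializingMap (hcont : Continuous g)
    (hspec : SpecializingMap g) (hsurj : Function.Surjective g)
    (hfib : ∀ ⦃x x'⦄, x ⤳ x' → g x = g x' → x = x') :
    topologicalKrullDim X = topologicalKrullDim Y := by
  -- In `specializationOrder`, `x ≤ y ↔ y ⤳ x`, so `hspec` lifts chains downwards from `g x`.
  let _ := specializationOrder X
  let _ := specializationOrder Y
  rw [topologicalKrullDim, topologicalKrullDim,
    Order.krullDim_eq_of_orderIso irreducibleSetEquivPoints,
    Order.krullDim_eq_of_orderIso irreducibleSetEquivPoints]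
  have hmono : Monotone g := fun _ _ h ↦ h.map hcont
  refine le_antisymm (Order.krullDim_le_of_strictMono g fun x x' hlt ↦ ?_)
    (Order.krullDim_le_of_surjective_of_exists_lt hsurj fun x y hlt ↦ ?_)
  · exact (hmono hlt.le).lt_of_ne fun he ↦ hlt.ne' (hfib hlt.le he.symm)
  · obtain ⟨x', hxx', rfl⟩ := hspec hlt.le
    exact ⟨x', lt_of_le_of_ne hxx' fun he ↦ hlt.ne (congrArg g he), rfl⟩

theorem IsClosedMap.topologicalKrullDim_image_eq (hg : IsClosedMap g) (hcont : Continuous g)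
    (hfib : ∀ ⦃x x'⦄, x ⤳ x' → g x = g x' → x = x') {Z : Set X} (hZ : IsClosed Z) :
    topologicalKrullDim (g '' Z) = topologicalKrullDim Z := by
  have : QuasiSober Z := hZ.isClosedEmbedding_subtypeVal.quasiSober
  have : QuasiSober (g '' Z) := (hg Z hZ).isClosedEmbedding_subtypeVal.quasiSober
  have hmaps := Set.mapsTo_image g Z
  refine (topologicalKrullDim_eq_of_specializingMap (hcont.restrict hmaps)
    (hg.mapsToRestrict hZ hmaps).specializingMap (Set.surjective_mapsTo_image_restrict g Z)
    fun x x' h he ↦ Subtype.ext ?_).symm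
  exact hfib (h.map continuous_subtype_val) (congrArg Subtype.val he)

end Topology

namespace AlgebraicGeometry.Scheme.Hom

variable {X Y : Scheme} (f : X ⟶ Y)

lemma eq_of_specializes_of_apply_eq [LocallyQuasiFinite f] {x x' : X} (h : x ⤳ x')
    (he : f x = f x') : x = x' := by
  have := (f.isDiscrete_preimage_singleton (f x')).to_subtype
  have hsub : (⟨x, he⟩ : f ⁻¹' {f x'}) ⤳ ⟨x', rfl⟩ := IsInducing.subtypeVal.specializes_iff.mp h
  exact congrArg Subtype.val (specializes_iff_eq.mp hsub)

variable [UniversallyClosed f] [LocallyQuasiFinite f]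

lemma topologicalKrullDim_image_eq {Z : Set X} (hZ : IsClosed Z) :
    topologicalKrullDim (f '' Z) = topologicalKrullDim Z :=
  f.isClosedMap.topologicalKrullDim_image_eq f.continuous
    (fun _ _ ↦ f.eq_of_specializes_of_apply_eq) hZ

lemma topologicalKrullDim_eq_of_surjective [Surjective f] :
    topologicalKrullDim X = topologicalKrullDim Y :=
  topologicalKrullDim_eq_of_specializingMap f.continuous f.isClosedMap.specializingMap
    f.surjective fun _ _ ↦ f.eq_of_specializes_of_apply_eq

end AlgebraicGeometry.Scheme.Hom

theorem new_section_descends_along_finite_surjective_base_change_general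
    (S S₀ C : Scheme)
    (p : S₀ ⟶ S) (hpfin : IsFinite p) (hpsurj : Surjective p)
    (f : C ⟶ S)
    (U : C.Opens)
    (hT₀ : ∃ T₀ : Set ↥(pullback f p), IsIrreducible T₀ ∧ IsClosed T₀ ∧
      T₀ ⊆ (pullback.fst f p).base ⁻¹' (U : Set C) ∧
      topologicalKrullDim ↥T₀ = topologicalKrullDim S₀) :
    ∃ T : Set C, IsIrreducible T ∧ IsClosed T ∧ T ⊆ (U : Set C) ∧
      topologicalKrullDim T = topologicalKrullDim S := by
  obtain ⟨T₀, hirr, hclosed, hsub, hdim⟩ := hT₀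
  set q := pullback.fst f p
  refine ⟨q '' T₀, hirr.image q q.continuous.continuousOn, q.isClosedMap T₀ hclosed,
    Set.image_subset_iff.mpr hsub, ?_⟩
  rw [q.topologicalKrullDim_image_eq hclosed, hdim, p.topologicalKrullDim_eq_of_surjective]

/-- A 'new section datum' (an irreducible closed subset of the total space,
inside a given open, of the dimension of the base) descends along a finite surjective base
change `p : S₀ ⟶ S`. Here `C₀ = C ×_S S₀` and `q : C₀ ⟶ C` is the first projection. -/
theorem new_section_descends_along_finite_surjective_base_change
    (K : Type) [Field K] [IsAlgClosed K]
    (S S₀ C : Scheme)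
    (sS : S ⟶ Spec (CommRingCat.of K)) (sS₀ : S₀ ⟶ Spec (CommRingCat.of K))
    (sC : C ⟶ Spec (CommRingCat.of K))
    (hS : IsVarietyOver K S sS) (hS₀ : IsVarietyOver K S₀ sS₀)
    (hCsep : IsSeparated sC) (hClft : LocallyOfFiniteType sC) (hCqc : QuasiCompact sC)
    (p : S₀ ⟶ S) (hpfin : IsFinite p) (hpsurj : Surjective p)
    (f : C ⟶ S) (hfprop : IsProper f)
    (U : C.Opens)
    (hT₀ : ∃ T₀ : Set ↥(pullback f p), IsIrreducible T₀ ∧ IsClosed T₀ ∧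
      T₀ ⊆ (pullback.fst f p).base ⁻¹' (U : Set C) ∧
      topologicalKrullDim ↥T₀ = topologicalKrullDim S₀) :
    ∃ T : Set C, IsIrreducible T ∧ IsClosed T ∧ T ⊆ (U : Set C) ∧
      topologicalKrullDim T = topologicalKrullDim S :=
  new_section_descends_along_finite_surjective_base_change_general S S₀ C p hpfin hpsurj f U hT₀
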